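/- arXiv:2602.06186 — 7 statements merged into one kernel-verified Lean document; each statement's English description precedes it below -/
import Mathlib

section
/- Let Y be a normed space, C ⊂ Y a cone, and ε, μ ∈ (0,1). Define C_ε° := cone((S_Y ∩ C) + εB_Y). Then (C_ε°)_μ° ⊂ C_{ε+(1+ε)μ}° ⊂ C_{ε+2μ}°. -/
open Pointwise
/-- The conic hull of a set. -/
def coneHull {E : Type*} [AddCommMonoid E] [Module ℝ E] (A : Set E) : Set E :=
  {x | ∃ l : ℝ, ∃ a ∈ A, 0 ≤ l ∧ x = l • a}

/-- A set is a cone if it is stable under multiplication by nonnegative scalars. -/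
def IsCone {E : Type*} [AddCommMonoid E] [Module ℝ E] (C : Set E) : Prop :=
  ∀ r : ℝ, 0 ≤ r → ∀ x ∈ C, r • x ∈ C

/-- The open ε-conic neighbourhood `C_ε° := cone((S_Y ∩ C) + εB_Y)`. -/
def coneNbhd {Y : Type*} [NormedAddCommGroup Y] [NormedSpace ℝ Y]
    (C : Set Y) (ε : ℝ) : Set Y :=
  coneHull ((Metric.sphere (0 : Y) 1 ∩ C) + ε • Metric.closedBall (0 : Y) 1)

lemma mem_coneNbhd_iff {Y : Type*} [NormedAddCommGroup Y] [NormedSpace ℝ Y]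
    (C : Set Y) (ε : ℝ) (x : Y) :
    x ∈ coneNbhd C ε ↔ ∃ (l : ℝ) (s b : Y), 0 ≤ l ∧ ‖s‖ = 1 ∧ s ∈ C ∧ ‖b‖ ≤ 1 ∧ x = l • (s + ε • b) := by
  constructor
  · rintro ⟨l, a, ⟨s, hs, v, hv, rfl⟩, hl, rfl⟩
    obtain ⟨b, hb, rfl⟩ := hv
    exact ⟨l, s, b, hl, by simpa using hs.1, hs.2, by simpa using hb, rfl⟩
  · rintro ⟨l, s, b, hl, hs1, hsC, hb, rfl⟩
    exact ⟨l, s + ε • b, ⟨s, ⟨by simpa using hs1, hsC⟩, ε • b,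
      ⟨b, by simpa using hb, rfl⟩, rfl⟩, hl, rfl⟩

lemma coneNbhd_mono {Y : Type*} [NormedAddCommGroup Y] [NormedSpace ℝ Y]
    (C : Set Y) {ε ε' : ℝ} (h0 : 0 ≤ ε) (h : ε ≤ ε') :
    coneNbhd C ε ⊆ coneNbhd C ε' := by
  intro x hx
  rw [mem_coneNbhd_iff] at hx ⊢
  obtain ⟨l, s, b, hl, hs1, hsC, hb, rfl⟩ := hx
  rcases eq_or_lt_of_le (h0.trans h) with h' | h'
  · refine ⟨l, s, b, hl, hs1, hsC, hb, ?_⟩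
    have : ε = 0 := le_antisymm (h.trans h'.symm.le) h0
    rw [this, ← h']
  · refine ⟨l, s, (ε / ε') • b, hl, hs1, hsC, ?_, ?_⟩
    · rw [norm_smul, Real.norm_eq_abs, abs_of_nonneg (by positivity)]
      calc ε / ε' * ‖b‖ ≤ 1 * 1 := by
            apply mul_le_mul _ hb (norm_nonneg _) zero_le_one
            rw [div_le_one h']; exact h
        _ = 1 := one_mul 1
    · rw [smul_smul, mul_div_cancel₀ _ h'.ne']

/-- for a cone `C` and `ε, μ ∈ (0,1)`,
`(C_ε°)_μ° ⊂ C_{ε+(1+ε)μ}° ⊂ C_{ε+2μ}°`. -/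
theorem coneNbhd_coneNbhd_subset {Y : Type*} [NormedAddCommGroup Y] [NormedSpace ℝ Y]
    (C : Set Y) (hC : IsCone C) (ε μ : ℝ)
    (hε0 : 0 < ε) (hε1 : ε < 1) (hμ0 : 0 < μ) (hμ1 : μ < 1) :
    coneNbhd (coneNbhd C ε) μ ⊆ coneNbhd C (ε + (1 + ε) * μ) ∧
      coneNbhd C (ε + (1 + ε) * μ) ⊆ coneNbhd C (ε + 2 * μ) := by
  constructor
  · intro x hx
    rw [mem_coneNbhd_iff] at hx ⊢
    obtain ⟨l, u, b, hl, hu1, huC, hb, rfl⟩ := hx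
    rw [mem_coneNbhd_iff] at huC
    obtain ⟨m, s, c, hm, hs1, hsC, hc, rfl⟩ := huC
    set ε' : ℝ := ε + (1 + ε) * μ with hε'
    have hε'pos : 0 < ε' := by positivity
    -- bound on m: 1 = ‖m•(s+ε•c)‖ ≤ m(1+ε)
    have hnb : ‖s + ε • c‖ ≤ 1 + ε := by
      calc ‖s + ε • c‖ ≤ ‖s‖ + ‖ε • c‖ := norm_add_le _ _
        _ ≤ 1 + ε := by
            rw [hs1, norm_smul, Real.norm_eq_abs, abs_of_pos hε0]
            nlinarith [norm_nonneg c]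
    have hm1 : 1 ≤ m * (1 + ε) := by
      calc (1:ℝ) = ‖m • (s + ε • c)‖ := hu1.symm
        _ = m * ‖s + ε • c‖ := by
            rw [norm_smul, Real.norm_eq_abs, abs_of_nonneg hm]
        _ ≤ m * (1 + ε) := by nlinarith
    have hmpos : 0 < m := by nlinarith
    refine ⟨l * m, s, ε'⁻¹ • (ε • c + (μ / m) • b), by positivity, hs1, hsC, ?_, ?_⟩
    · rw [norm_smul, Real.norm_eq_abs, abs_of_nonneg (by positivity)]
      have hμm : μ / m ≤ (1 + ε) * μ := by
        rw [div_le_iff₀ hmpos]; nlinarith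
      have : ‖ε • c + (μ / m) • b‖ ≤ ε' := by
        calc ‖ε • c + (μ / m) • b‖ ≤ ‖ε • c‖ + ‖(μ / m) • b‖ := norm_add_le _ _
          _ ≤ ε * 1 + (μ / m) * 1 := by
              rw [norm_smul, norm_smul, Real.norm_eq_abs, Real.norm_eq_abs,
                abs_of_pos hε0, abs_of_pos (by positivity)]
              gcongr
          _ ≤ ε' := by rw [hε']; nlinarith
      calc ε'⁻¹ * ‖ε • c + (μ / m) • b‖ ≤ ε'⁻¹ * ε' := by gcongr
        _ = 1 := inv_mul_cancel₀ hε'pos.ne'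
    · rw [smul_inv_smul₀ hε'pos.ne']
      match_scalars <;> field_simp <;> ring
  · exact coneNbhd_mono C (by positivity) (by nlinarith)
end

section
/- Let Y be a normed space, C ⊂ Y a cone, and 0 < ε < μ < 1. Define C_ε := cone(cl((S_Y ∩ C) + εB_Y)) and C_μ° := cone((S_Y ∩ C) + μB_Y). Then C_ε ⊂ C_μ°. -/
open Pointwise
/-- The closed ε-conic neighbourhood `C_ε := cone(cl((S_Y ∩ C) + εB_Y))`. -/
def coneNbhdCl {Y : Type*} [NormedAddCommGroup Y] [NormedSpace ℝ Y]
    (C : Set Y) (ε : ℝ) : Set Y :=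
  coneHull (closure ((Metric.sphere (0 : Y) 1 ∩ C) + ε • Metric.closedBall (0 : Y) 1))

/-- for a cone `C` and `0 < ε < μ < 1`, `C_ε ⊂ C_μ°`. -/
theorem coneNbhdCl_subset_coneNbhd {Y : Type*} [NormedAddCommGroup Y] [NormedSpace ℝ Y]
    (C : Set Y) (hC : IsCone C) (ε μ : ℝ)
    (hε0 : 0 < ε) (hεμ : ε < μ) (hμ1 : μ < 1) :
    coneNbhdCl C ε ⊆ coneNbhd C μ := by
  rintro x ⟨l, a, ha, hl, rfl⟩
  refine ⟨l, a, ?_, hl, rfl⟩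
  have hδ : (0:ℝ) < μ - ε := by linarith
  obtain ⟨y, hy, hxy⟩ := Metric.mem_closure_iff.mp ha (μ - ε) hδ
  obtain ⟨s, hs, e, he, rfl⟩ := hy
  obtain ⟨z, hz, rfl⟩ := he
  simp only [Metric.mem_closedBall, dist_zero_right] at hz
  refine ⟨s, hs, ε • z + (a - (s + ε • z)), ?_, by module⟩
  have hμ0 : (0:ℝ) < μ := lt_trans hε0 hεμ
  refine ⟨μ⁻¹ • (ε • z + (a - (s + ε • z))), ?_, by
    show μ • μ⁻¹ • _ = _; rw [smul_inv_smul₀ hμ0.ne']⟩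
  simp only [Metric.mem_closedBall, dist_zero_right, norm_smul, Real.norm_eq_abs,
    abs_of_pos (inv_pos.mpr hμ0)]
  rw [inv_mul_le_iff₀ hμ0]
  calc ‖ε • z + (a - (s + ε • z))‖ ≤ ‖ε • z‖ + ‖a - (s + ε • z)‖ := norm_add_le _ _
    _ ≤ ε * 1 + (μ - ε) := by
        gcongr
        · rw [norm_smul, Real.norm_eq_abs, abs_of_pos hε0]; gcongr
        · rw [← dist_eq_norm]; exact hxy.le
    _ = μ * 1 := by ring
end

section
/- Let Y be a normed space and C ⊂ Y a cone. For 0 < ε < 1 define C_ε° := cone((S_Y ∩ C) + εB_Y) and C_ε := cone(cl((S_Y ∩ C) + εB_Y)). Then cl(C_ε°) = C_ε; that is, the closure of the conic hull of (S_Y ∩ C) + εB_Y equals the conic hull of its closure. -/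
open Pointwise
/-- for a cone `C` and `0 < ε < 1`, `cl(C_ε°) = C_ε`. -/
theorem closure_coneNbhd_eq_coneNbhdCl {Y : Type*} [NormedAddCommGroup Y]
    [NormedSpace ℝ Y] (C : Set Y) (hC : IsCone C) (ε : ℝ)
    (hε0 : 0 < ε) (hε1 : ε < 1) :
    closure (coneNbhd C ε) = coneNbhdCl C ε := by
  set A := (Metric.sphere (0 : Y) 1 ∩ C) + ε • Metric.closedBall (0 : Y) 1 with hAdef
  have hbound : ∀ a ∈ A, 1 - ε ≤ ‖a‖ ∧ ‖a‖ ≤ 1 + ε := by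
    rintro a ⟨s, hs, b, hb, rfl⟩
    have hs1 : ‖s‖ = 1 := by simpa using hs.1
    obtain ⟨c, hc, rfl⟩ := hb
    have hc1 : ‖c‖ ≤ 1 := by simpa using hc
    have hεc : ‖ε • c‖ ≤ ε := by
      rw [norm_smul, Real.norm_of_nonneg hε0.le]
      nlinarith
    constructor
    · have h1 : ‖s‖ ≤ ‖s + ε • c‖ + ‖ε • c‖ := by
        calc ‖s‖ = ‖(s + ε • c) - ε • c‖ := by rw [add_sub_cancel_right]
        _ ≤ ‖s + ε • c‖ + ‖ε • c‖ := norm_sub_le _ _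
      linarith
    · have := norm_add_le s (ε • c)
      linarith
  have hboundcl : ∀ a ∈ closure A, 1 - ε ≤ ‖a‖ ∧ ‖a‖ ≤ 1 + ε := by
    have hsub : closure A ⊆ (fun y => ‖y‖) ⁻¹' Set.Icc (1 - ε) (1 + ε) :=
      closure_minimal (fun a ha => hbound a ha) (isClosed_Icc.preimage continuous_norm)
    exact fun a ha => hsub ha
  have he1 : (0 : ℝ) < 1 - ε := by linarith
  show closure (coneHull A) = coneHull (closure A)
  apply subset_antisymm
  · intro x hx
    rw [mem_closure_iff_seq_limit] at hx
    obtain ⟨u, hu, hux⟩ := hx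
    choose l a ha hl hua using hu
    obtain ⟨M, hM⟩ : ∃ M, ∀ n, ‖u n‖ ≤ M := by
      obtain ⟨M, hM⟩ := hux.norm.bddAbove_range
      exact ⟨M, fun n => hM ⟨n, rfl⟩⟩
    have hlM : ∀ n, l n ∈ Set.Icc (0 : ℝ) (M / (1 - ε)) := by
      intro n
      refine ⟨hl n, ?_⟩
      have h1 : l n * (1 - ε) ≤ l n * ‖a n‖ :=
        mul_le_mul_of_nonneg_left (hbound _ (ha n)).1 (hl n)
      have h2 : l n * ‖a n‖ = ‖u n‖ := by
        rw [hua n, norm_smul, Real.norm_of_nonneg (hl n)]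
      rw [le_div_iff₀ he1]
      have := hM n
      linarith
    obtain ⟨l₀, hl₀, φ, hφ, htend⟩ := isCompact_Icc.tendsto_subseq hlM
    have huφ : Filter.Tendsto (u ∘ φ) Filter.atTop (nhds x) :=
      hux.comp hφ.tendsto_atTop
    rcases eq_or_lt_of_le hl₀.1 with h0 | hpos
    · -- l₀ = 0, so x = 0
      have hxz : x = 0 := by
        have hnorm : Filter.Tendsto (fun n => ‖u (φ n)‖) Filter.atTop (nhds 0) := by
          have hle : ∀ n, ‖u (φ n)‖ ≤ l (φ n) * (1 + ε) := by
            intro n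
            rw [hua (φ n), norm_smul, Real.norm_of_nonneg (hl (φ n))]
            exact mul_le_mul_of_nonneg_left (hbound _ (ha (φ n))).2 (hl (φ n))
          have hmul : Filter.Tendsto (fun n => l (φ n) * (1 + ε)) Filter.atTop (nhds 0) := by
            have := htend.mul_const (1 + ε)
            rwa [← h0, zero_mul] at this
          exact squeeze_zero (fun n => norm_nonneg _) hle hmul
        have : Filter.Tendsto (u ∘ φ) Filter.atTop (nhds 0) :=
          tendsto_zero_iff_norm_tendsto_zero.2 hnorm
        exact tendsto_nhds_unique huφ this
      exact ⟨0, a 0, subset_closure (ha 0), le_refl 0, by simp [hxz]⟩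
    · -- l₀ > 0
      have hinv : Filter.Tendsto (fun n => (l (φ n))⁻¹ • u (φ n)) Filter.atTop
          (nhds (l₀⁻¹ • x)) :=
        ((htend.inv₀ hpos.ne').smul huφ)
      have hev : ∀ᶠ n in Filter.atTop, (l (φ n))⁻¹ • u (φ n) = a (φ n) := by
        filter_upwards [htend.eventually (eventually_gt_nhds hpos)] with n hn
        rw [hua (φ n), smul_smul, inv_mul_cancel₀ (show l (φ n) ≠ 0 from hn.ne'), one_smul]
      have haφ : Filter.Tendsto (fun n => a (φ n)) Filter.atTop (nhds (l₀⁻¹ • x)) :=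
        hinv.congr' hev
      have hmem : l₀⁻¹ • x ∈ closure A :=
        mem_closure_of_tendsto haφ (Filter.Eventually.of_forall fun n => ha (φ n))
      exact ⟨l₀, l₀⁻¹ • x, hmem, hpos.le, (smul_inv_smul₀ hpos.ne' x).symm⟩
  · rintro x ⟨lx, ax, haA, hlx, rfl⟩
    exact map_mem_closure (continuous_const_smul lx) haA
      (fun y hy => ⟨lx, y, hy, hlx, rfl⟩)
end

section
/- Let Y be a locally convex topological vector space and K ⊂ Y a closed convex cone with nonempty algebraic core. Then there exists a sublinear functional p : Y → ℝ that is K-monotone (p(y₁) ≥ p(y₂) whenever y₁ - y₂ ∈ K) and satisfies p(x) ≤ 0 for all x ∈ -K and p(y) > 0 for all y ∉ -K. -/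
/-!
Fix `k` in the algebraic core of `K` and take the Gerstewitz functional
`p y = inf {t | t • k - y ∈ K}`. The core point makes the infimum finite, and when `K ≠ Y`
it also forces `-k ∉ K`, so `t • k ∈ K ↔ 0 ≤ t`. Since `K` is closed, the infimum is attained:
`p y ≤ t ↔ t • k - y ∈ K`. Every required property of `p` then reduces to the cone axioms.
-/

/-- The algebraic core of a set. -/
def algCore {E : Type*} [AddCommMonoid E] [Module ℝ E] (A : Set E) : Set E :=
  {a ∈ A | ∀ v : E, ∃ δ : ℝ, 0 < δ ∧ ∀ ζ : ℝ, 0 ≤ ζ → ζ ≤ δ → a + ζ • v ∈ A}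

/-- A sublinear functional: positively homogeneous and subadditive. -/
def Sublinear {E : Type*} [AddCommMonoid E] [Module ℝ E] (p : E → ℝ) : Prop :=
  (∀ l : ℝ, 0 ≤ l → ∀ x, p (l • x) = l * p x) ∧ ∀ x y, p (x + y) ≤ p x + p y

open Set

lemma Convex.add_mem_of_smul_mem {Y : Type*} [AddCommGroup Y] [Module ℝ Y] {K : Set Y}
    (hconv : Convex ℝ K) (hsmul : ∀ r : ℝ, 0 ≤ r → ∀ x ∈ K, r • x ∈ K)
    {a b : Y} (ha : a ∈ K) (hb : b ∈ K) : a + b ∈ K := by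
  have hmid : (1 / 2 : ℝ) • a + (1 / 2 : ℝ) • b ∈ K :=
    hconv ha hb (by norm_num) (by norm_num) (by norm_num)
  convert hsmul 2 (by norm_num) _ hmid using 1
  rw [smul_add, smul_smul, smul_smul]
  norm_num

def Convex.toPointedCone {Y : Type*} [AddCommGroup Y] [Module ℝ Y] {K : Set Y}
    (hconv : Convex ℝ K) (hsmul : ∀ r : ℝ, 0 ≤ r → ∀ x ∈ K, r • x ∈ K) (hne : K.Nonempty) :
    PointedCone ℝ Y where
  carrier := K
  add_mem' := hconv.add_mem_of_smul_mem hsmul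
  zero_mem' := by
    obtain ⟨x, hx⟩ := hne
    simpa using hsmul 0 le_rfl x hx
  smul_mem' c x hx := hsmul c c.2 x hx

namespace PointedCone

variable {Y : Type*} [AddCommGroup Y] [Module ℝ Y] (C : PointedCone ℝ Y) {k : Y}

lemma exists_smul_add_mem_of_mem_algCore (hk : k ∈ algCore (C : Set Y)) (v : Y) :
    ∃ t : ℝ, 0 < t ∧ t • k + v ∈ C := by
  obtain ⟨δ, hδ, h⟩ := hk.2 v
  refine ⟨δ⁻¹, inv_pos.2 hδ, ?_⟩
  convert C.smul_mem (inv_pos.2 hδ).le (h δ hδ.le le_rfl) using 1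
  rw [smul_add, smul_smul, inv_mul_cancel₀ hδ.ne', one_smul]

lemma eq_top_of_neg_mem_of_mem_algCore (hk : k ∈ algCore (C : Set Y)) (hneg : -k ∈ C) :
    C = ⊤ := by
  refine eq_top_iff.2 fun z _ => ?_
  obtain ⟨t, ht, hz⟩ := C.exists_smul_add_mem_of_mem_algCore hk z
  simpa using C.add_mem hz (C.smul_mem ht.le hneg)

lemma smul_mem_iff_nonneg (hk : k ∈ C) (hneg : -k ∉ C) {t : ℝ} : t • k ∈ C ↔ 0 ≤ t := by
  refine ⟨fun ht => ?_, fun ht => C.smul_mem ht hk⟩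
  by_contra! hlt
  refine hneg ?_
  convert C.smul_mem (neg_nonneg.2 (inv_nonpos.2 hlt.le)) ht using 1
  rw [smul_smul, neg_mul, inv_mul_cancel₀ hlt.ne, neg_one_smul]

/-- The Gerstewitz (Tammer–Weidner) scalarizing functional of `C` in direction `k`. -/
noncomputable def gerstewitz (k y : Y) : ℝ :=
  sInf {t : ℝ | t • k - y ∈ C}

lemma bddBelow_smul_sub_mem (hk : k ∈ algCore (C : Set Y)) (hneg : -k ∉ C) (y : Y) :
    BddBelow {t : ℝ | t • k - y ∈ C} := by
  obtain ⟨s, -, hs⟩ := C.exists_smul_add_mem_of_mem_algCore hk y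
  refine ⟨-s, fun t ht => ?_⟩
  have hsum : (t + s) • k ∈ C := by
    convert C.add_mem ht hs using 1
    rw [add_smul]
    abel
  linarith [(C.smul_mem_iff_nonneg hk.1 hneg).1 hsum]

lemma smul_sub_mem_of_le {y : Y} (hk : k ∈ C) {t s : ℝ} (ht : t • k - y ∈ C) (hts : t ≤ s) :
    s • k - y ∈ C := by
  convert C.add_mem ht (C.smul_mem (sub_nonneg.2 hts) hk) using 1
  rw [sub_smul]
  abel

variable [TopologicalSpace Y] [IsTopologicalAddGroup Y] [ContinuousSMul ℝ Y]

lemma gerstewitz_le_iff (hC : IsClosed (C : Set Y)) (hk : k ∈ algCore (C : Set Y))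
    (hneg : -k ∉ C) {y : Y} {t : ℝ} : C.gerstewitz k y ≤ t ↔ t • k - y ∈ C := by
  have hne : {t : ℝ | t • k - y ∈ C}.Nonempty := by
    obtain ⟨s, -, hs⟩ := C.exists_smul_add_mem_of_mem_algCore hk (-y)
    exact ⟨s, by simpa [sub_eq_add_neg] using hs⟩
  have hbdd := C.bddBelow_smul_sub_mem hk hneg y
  have hclosed : IsClosed {t : ℝ | t • k - y ∈ C} :=
    hC.preimage ((continuous_id.smul continuous_const).sub continuous_const)
  exact ⟨fun h => C.smul_sub_mem_of_le hk.1 (hclosed.csInf_mem hne hbdd) h,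
    fun h => csInf_le hbdd h⟩

lemma gerstewitz_smul_sub_mem (hC : IsClosed (C : Set Y)) (hk : k ∈ algCore (C : Set Y))
    (hneg : -k ∉ C) (y : Y) : C.gerstewitz k y • k - y ∈ C :=
  (C.gerstewitz_le_iff hC hk hneg).1 le_rfl

variable {C}

section

variable (hC : IsClosed (C : Set Y)) (hk : k ∈ algCore (C : Set Y)) (hneg : -k ∉ C)
include hC hk hneg

lemma gerstewitz_zero : C.gerstewitz k 0 = 0 := by
  refine le_antisymm ((C.gerstewitz_le_iff hC hk hneg).2 (by simp)) ?_
  have h := C.gerstewitz_smul_sub_mem hC hk hneg 0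
  rw [sub_zero] at h
  exact (C.smul_mem_iff_nonneg hk.1 hneg).1 h

lemma gerstewitz_smul {l : ℝ} (hl : 0 ≤ l) (x : Y) :
    C.gerstewitz k (l • x) = l * C.gerstewitz k x := by
  rcases hl.eq_or_lt with rfl | hl
  · rw [zero_smul, zero_mul, gerstewitz_zero hC hk hneg]
  refine eq_of_forall_ge_iff fun t => ?_
  have hscale : l⁻¹ • (t • k - l • x) = (t / l) • k - x := by
    rw [smul_sub, smul_smul, smul_smul, inv_mul_cancel₀ hl.ne', one_smul, div_eq_inv_mul]
  rw [C.gerstewitz_le_iff hC hk hneg, ← C.smul_mem_iff (inv_pos.2 hl), hscale,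
    ← C.gerstewitz_le_iff hC hk hneg, le_div_iff₀' hl]

lemma gerstewitz_add_le (x y : Y) :
    C.gerstewitz k (x + y) ≤ C.gerstewitz k x + C.gerstewitz k y := by
  rw [C.gerstewitz_le_iff hC hk hneg]
  convert C.add_mem (C.gerstewitz_smul_sub_mem hC hk hneg x)
    (C.gerstewitz_smul_sub_mem hC hk hneg y) using 1
  rw [add_smul]
  abel

lemma sublinear_gerstewitz : Sublinear (C.gerstewitz k) :=
  ⟨fun _ hl x => gerstewitz_smul hC hk hneg hl x, gerstewitz_add_le hC hk hneg⟩

lemma gerstewitz_le_of_sub_mem {y₁ y₂ : Y} (h : y₁ - y₂ ∈ C) :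
    C.gerstewitz k y₂ ≤ C.gerstewitz k y₁ := by
  rw [C.gerstewitz_le_iff hC hk hneg]
  convert C.add_mem (C.gerstewitz_smul_sub_mem hC hk hneg y₁) h using 1
  abel

lemma gerstewitz_nonpos_iff {y : Y} : C.gerstewitz k y ≤ 0 ↔ -y ∈ C := by
  rw [C.gerstewitz_le_iff hC hk hneg, zero_smul, zero_sub]

end

end PointedCone

theorem exists_monotone_sublinear_separating_general {Y : Type*} [AddCommGroup Y] [Module ℝ Y]
    [TopologicalSpace Y] [IsTopologicalAddGroup Y] [ContinuousSMul ℝ Y]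
    (K : Set Y) (hKcone : ∀ r : ℝ, 0 ≤ r → ∀ x ∈ K, r • x ∈ K)
    (hKconv : Convex ℝ K) (hKcl : IsClosed K) (hcore : (algCore K).Nonempty) :
    ∃ p : Y → ℝ, Sublinear p ∧
      (∀ y₁ y₂ : Y, y₁ - y₂ ∈ K → p y₂ ≤ p y₁) ∧
      (∀ x ∈ -K, p x ≤ 0) ∧ (∀ y ∉ (-K : Set Y), 0 < p y) := by
  obtain ⟨k, hk⟩ := hcore
  set C := hKconv.toPointedCone hKcone ⟨k, hk.1⟩
  by_cases hneg : -k ∈ C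
  · have hK : K = univ := congrArg SetLike.coe (C.eq_top_of_neg_mem_of_mem_algCore hk hneg)
    refine ⟨fun _ => 0, ⟨fun _ _ _ => (mul_zero _).symm, fun _ _ => by simp⟩,
      fun _ _ _ => le_rfl, fun _ _ => le_rfl, fun y hy => absurd (by simp [hK]) hy⟩
  refine ⟨C.gerstewitz k, PointedCone.sublinear_gerstewitz hKcl hk hneg,
    fun _ _ => PointedCone.gerstewitz_le_of_sub_mem hKcl hk hneg,
    fun x hx => (PointedCone.gerstewitz_nonpos_iff hKcl hk hneg).2 hx,
    fun y hy => lt_of_not_ge fun h => hy ((PointedCone.gerstewitz_nonpos_iff hKcl hk hneg).1 h)⟩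

/-- in a locally convex space, if `K` is a closed convex cone with nonempty
algebraic core, then there is a `K`-monotone sublinear functional `p` with
`p ≤ 0` on `-K` and `p > 0` off `-K`. -/
theorem exists_monotone_sublinear_separating {Y : Type*} [AddCommGroup Y] [Module ℝ Y]
    [TopologicalSpace Y] [IsTopologicalAddGroup Y] [ContinuousSMul ℝ Y]
    [LocallyConvexSpace ℝ Y]
    (K : Set Y) (hKcone : ∀ r : ℝ, 0 ≤ r → ∀ x ∈ K, r • x ∈ K)
    (hKconv : Convex ℝ K) (hKcl : IsClosed K) (hcore : (algCore K).Nonempty) :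
    ∃ p : Y → ℝ, Sublinear p ∧
      (∀ y₁ y₂ : Y, y₁ - y₂ ∈ K → p y₂ ≤ p y₁) ∧
      (∀ x ∈ -K, p x ≤ 0) ∧ (∀ y ∉ (-K : Set Y), 0 < p y) :=
  exists_monotone_sublinear_separating_general K hKcone hKconv hKcl hcore
end

section
/- Let X be a normed space and C ⊂ X a convex cone with a bounded base B. Then there exists ε' > 0 such that for every 0 < ε < ε', the Henig dilated cone C_{(B,ε)} := cone({y ∈ X : d(y, B) ≤ ε}) admits a bounded base. -/
/-- `B` is a base of the cone `C`: a nonempty convex set with `0 ∉ cl(B)` such that every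
nonzero `y ∈ C` has a unique representation `y = λ • b` with `λ > 0`, `b ∈ B`. -/
def IsBase {X : Type*} [NormedAddCommGroup X] [NormedSpace ℝ X]
    (C B : Set X) : Prop :=
  B.Nonempty ∧ Convex ℝ B ∧ (0 : X) ∉ closure B ∧
    ∀ y ∈ C, y ≠ 0 → ∃! p : ℝ × X, (0 < p.1 ∧ p.2 ∈ B) ∧ y = p.1 • p.2

/-- The Henig dilating cone `C_{(B,ε)} := cone({y : d(y,B) ≤ ε})`. -/
def henigCone {X : Type*} [NormedAddCommGroup X] [NormedSpace ℝ X]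
    (B : Set X) (ε : ℝ) : Set X :=
  coneHull {y : X | Metric.infDist y B ≤ ε}

/-!
For `ε < d(0, B)` the set `A = {y : d(y, B) ≤ ε}` is the closed `ε`-thickening of `B`: convex,
closed, bounded and missing `0`. Hahn–Banach gives `f ∈ X*` and `u > 0` with `u < f` on `A`, so
`f` is strictly positive on `cone(A) \ {0}` and `{x ∈ cone(A) : f x = 1}` is a base of `cone(A)`.
A point `l • a` of this base has `l = 1 / f a < 1 / u`, so the base lies in the ball of radius
`sup ‖A‖ / u`.
-/

open Metric

theorem setOf_infDist_le_eq_cthickening {X : Type*} [PseudoMetricSpace X] {B : Set X}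
    (hB : B.Nonempty) {ε : ℝ} (hε : 0 ≤ ε) :
    {y : X | infDist y B ≤ ε} = cthickening ε B := by
  ext y
  rw [Set.mem_ofPred_eq, mem_cthickening_iff]
  exact (ENNReal.le_ofReal_iff_toReal_le (infEDist_ne_top hB) hε).symm

section ConeHull

variable {E : Type*} [AddCommGroup E] [Module ℝ E] {A : Set E}

theorem subset_coneHull : A ⊆ coneHull A :=
  fun a ha => ⟨1, a, ha, zero_le_one, (one_smul ℝ a).symm⟩

theorem smul_mem_coneHull {r : ℝ} (hr : 0 ≤ r) {x : E} (hx : x ∈ coneHull A) :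
    r • x ∈ coneHull A := by
  obtain ⟨l, a, ha, hl, rfl⟩ := hx
  exact ⟨r * l, a, ha, mul_nonneg hr hl, smul_smul r l a⟩

theorem Convex.coneHull (hA : Convex ℝ A) : Convex ℝ (coneHull A) := by
  rintro _ ⟨l₁, a₁, ha₁, hl₁, rfl⟩ _ ⟨l₂, a₂, ha₂, hl₂, rfl⟩ s t hs ht hst
  have hw₁ : 0 ≤ s * l₁ := mul_nonneg hs hl₁
  have hw₂ : 0 ≤ t * l₂ := mul_nonneg ht hl₂
  rw [smul_smul, smul_smul]
  rcases (add_nonneg hw₁ hw₂).eq_or_lt with hL | hL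
  · obtain ⟨h₁, h₂⟩ : s * l₁ = 0 ∧ t * l₂ = 0 := by constructor <;> linarith
    exact ⟨0, a₁, ha₁, le_rfl, by simp [h₁, h₂]⟩
  · -- `s l₁ a₁ + t l₂ a₂ = L • (convex combination of a₁, a₂)` with `L = s l₁ + t l₂`
    set L := s * l₁ + t * l₂
    refine ⟨L, (s * l₁ / L) • a₁ + (t * l₂ / L) • a₂,
      hA ha₁ ha₂ (div_nonneg hw₁ hL.le) (div_nonneg hw₂ hL.le) ?_, hL.le, ?_⟩
    · rw [← add_div, div_self hL.ne']
    · rw [smul_add, smul_smul, smul_smul, mul_div_cancel₀ _ hL.ne', mul_div_cancel₀ _ hL.ne']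

end ConeHull

section Base

variable {X : Type*} [NormedAddCommGroup X] [NormedSpace ℝ X]

theorem isBase_sep_eq_one_of_pos {K : Set X} (hK_smul : ∀ r : ℝ, 0 ≤ r → ∀ x ∈ K, r • x ∈ K)
    (hK_conv : Convex ℝ K) (hK_ne : ∃ x ∈ K, x ≠ 0) {f : X →L[ℝ] ℝ}
    (hf : ∀ x ∈ K, x ≠ 0 → 0 < f x) : IsBase K {x ∈ K | f x = 1} := by
  have normalize : ∀ y ∈ K, y ≠ 0 → (f y)⁻¹ • y ∈ {x ∈ K | f x = 1} := fun y hy hy0 =>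
    ⟨hK_smul _ (inv_nonneg.2 (hf y hy hy0).le) y hy,
      by rw [map_smul, smul_eq_mul, inv_mul_cancel₀ (hf y hy hy0).ne']⟩
  refine ⟨?_, ?_, ?_, ?_⟩
  · obtain ⟨y, hy, hy0⟩ := hK_ne
    exact ⟨_, normalize y hy hy0⟩
  · rintro x ⟨hx, hfx⟩ y ⟨hy, hfy⟩ s t hs ht hst
    exact ⟨hK_conv hx hy hs ht hst, by simp [hfx, hfy, hst]⟩
  · have hclosed : closure {x ∈ K | f x = 1} ⊆ {x | f x = 1} :=
      closure_minimal (fun x hx => hx.2) (isClosed_eq f.continuous continuous_const)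
    intro h0
    simpa using hclosed h0
  · intro y hy hy0
    have hfy := hf y hy hy0
    refine ⟨(f y, (f y)⁻¹ • y), ⟨⟨hfy, normalize y hy hy0⟩, ?_⟩, ?_⟩
    · rw [smul_smul, mul_inv_cancel₀ hfy.ne', one_smul]
    · rintro ⟨l, b⟩ ⟨⟨hl, -, hfb⟩, rfl⟩
      have hfl : f (l • b) = l := by rw [map_smul, smul_eq_mul, hfb, mul_one]
      ext
      · exact hfl.symm
      · simp only [hfl, smul_smul, inv_mul_cancel₀ hl.ne', one_smul]

theorem isBounded_coneHull_sep_eq_one {A : Set X} (hA : Bornology.IsBounded A)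
    {f : X →L[ℝ] ℝ} {u : ℝ} (hu : 0 < u) (hfA : ∀ a ∈ A, u < f a) :
    Bornology.IsBounded {x ∈ coneHull A | f x = 1} := by
  obtain ⟨M, hM⟩ := hA.subset_closedBall 0
  refine (isBounded_closedBall (x := (0 : X)) (r := M / u)).subset ?_
  rintro _ ⟨⟨l, a, ha, hl, rfl⟩, hfx⟩
  have hfa : u < f a := hfA a ha
  have hl_eq : l = (f a)⁻¹ := by
    rw [map_smul, smul_eq_mul] at hfx
    exact eq_inv_of_mul_eq_one_left hfx
  have hna : ‖a‖ ≤ M := by simpa using hM ha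
  rw [mem_closedBall_zero_iff, norm_smul, Real.norm_of_nonneg hl, hl_eq, inv_mul_eq_div]
  exact div_le_div₀ ((norm_nonneg a).trans hna) hna hu hfa.le

theorem exists_isBase_coneHull_isBounded {A : Set X} (hA_conv : Convex ℝ A)
    (hA_closed : IsClosed A) (hA_bdd : Bornology.IsBounded A) (hA_ne : A.Nonempty)
    (h0 : (0 : X) ∉ A) :
    ∃ B : Set X, IsBase (coneHull A) B ∧ Bornology.IsBounded B := by
  obtain ⟨f, u, hu, hfA⟩ := geometric_hahn_banach_point_closed hA_conv hA_closed h0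
  rw [map_zero] at hu
  have hf : ∀ x ∈ coneHull A, x ≠ 0 → 0 < f x := by
    rintro _ ⟨l, a, ha, hl, rfl⟩ hx0
    have hl0 : 0 < l := hl.lt_of_ne (by rintro rfl; simp at hx0)
    rw [map_smul, smul_eq_mul]
    exact mul_pos hl0 (hu.trans (hfA a ha))
  obtain ⟨a, ha⟩ := hA_ne
  refine ⟨_, isBase_sep_eq_one_of_pos (fun r hr x hx => smul_mem_coneHull hr hx)
    hA_conv.coneHull ⟨a, subset_coneHull ha, ne_of_mem_of_not_mem ha h0⟩ hf,
    isBounded_coneHull_sep_eq_one hA_bdd hu hfA⟩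

end Base

theorem henigCone_has_bounded_base_general {X : Type*} [NormedAddCommGroup X] [NormedSpace ℝ X]
    (C B : Set X)
    (hB : IsBase C B) (hBbdd : Bornology.IsBounded B) :
    ∃ ε' > (0 : ℝ), ∀ ε : ℝ, 0 < ε → ε < ε' →
      ∃ B' : Set X, IsBase (henigCone B ε) B' ∧ Bornology.IsBounded B' := by
  obtain ⟨hB_ne, hB_conv, hB0, -⟩ := hB
  refine ⟨infDist 0 B, (infDist_pos_iff_notMem_closure hB_ne).1 hB0, fun ε hε hεδ => ?_⟩
  have hA := setOf_infDist_le_eq_cthickening hB_ne hε.le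
  have h0 : (0 : X) ∉ cthickening ε B := by
    rw [← hA]
    exact hεδ.not_ge
  rw [henigCone, hA]
  exact exists_isBase_coneHull_isBounded (hB_conv.cthickening ε) isClosed_cthickening
    hBbdd.cthickening (hB_ne.mono (self_subset_cthickening B)) h0

/-- if a convex cone `C` has a bounded base `B`, then there is `ε' > 0`
such that for every `0 < ε < ε'` the Henig dilated cone `C_{(B,ε)}` admits a bounded
base. -/
theorem henigCone_has_bounded_base {X : Type*} [NormedAddCommGroup X] [NormedSpace ℝ X]
    (C B : Set X) (hCcone : ∀ r : ℝ, 0 ≤ r → ∀ x ∈ C, r • x ∈ C) (hCconv : Convex ℝ C)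
    (hB : IsBase C B) (hBbdd : Bornology.IsBounded B) :
    ∃ ε' > (0 : ℝ), ∀ ε : ℝ, 0 < ε → ε < ε' →
      ∃ B' : Set X, IsBase (henigCone B ε) B' ∧ Bornology.IsBounded B' :=
  henigCone_has_bounded_base_general C B hB hBbdd
end

section
/- Let Z be a normed space, Ω a set, f : Ω → ℝ, g : Ω → Z, and r₀ := inf{f(x) : x ∈ Ω, g(x) = 0} ∈ ℝ. Suppose φ : Z → ℝ is sublinear and satisfies -φ(g(x)) < f(x) - r₀ for all x ∈ Ω with g(x) ≠ 0. Then r₀ = inf{f(x) + φ(g(x)) : x ∈ Ω}. Moreover, if r₀ = f(x₀) for some x₀ ∈ Ω with g(x₀) = 0, then x₀ minimizes x ↦ f(x) + φ(g(x)) over Ω and φ(g(x₀)) = 0. -/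
/-- let `r₀ = inf{f(x) : x ∈ Ω, g(x) = 0} ∈ ℝ` and let `φ` be sublinear
with `-φ(g(x)) < f(x) - r₀` whenever `x ∈ Ω`, `g(x) ≠ 0`. Then
`r₀ = inf{f(x) + φ(g(x)) : x ∈ Ω}`; and if `r₀ = f(x₀)` at a feasible `x₀`, then `x₀`
minimizes `f + φ∘g` over `Ω` and `φ(g(x₀)) = 0`. -/
theorem exact_penalty_sublinear {Z X : Type*} [NormedAddCommGroup Z] [NormedSpace ℝ Z]
    (Ω : Set X) (f : X → ℝ) (g : X → Z) (r₀ : ℝ)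
    (hfeas : ∃ x ∈ Ω, g x = 0)
    (hr₀ : IsGLB {r : ℝ | ∃ x ∈ Ω, g x = 0 ∧ f x = r} r₀)
    (φ : Z → ℝ) (hφ : Sublinear φ)
    (hpen : ∀ x ∈ Ω, g x ≠ 0 → -φ (g x) < f x - r₀) :
    IsGLB {r : ℝ | ∃ x ∈ Ω, f x + φ (g x) = r} r₀ ∧
      ∀ x₀ ∈ Ω, g x₀ = 0 → f x₀ = r₀ →
        (∀ x ∈ Ω, f x₀ + φ (g x₀) ≤ f x + φ (g x)) ∧ φ (g x₀) = 0 := by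
  have hφ0 : φ 0 = 0 := by
    have := hφ.1 0 le_rfl 0
    simpa using this
  have hlb : ∀ x ∈ Ω, r₀ ≤ f x + φ (g x) := by
    intro x hx
    by_cases hg : g x = 0
    · have : r₀ ≤ f x := hr₀.1 ⟨x, hx, hg, rfl⟩
      rw [hg, hφ0]; linarith
    · have := hpen x hx hg; linarith
  constructor
  · constructor
    · rintro r ⟨x, hx, rfl⟩
      exact hlb x hx
    · intro b hb
      apply hr₀.2
      rintro r ⟨x, hx, hg, rfl⟩
      have : f x + φ (g x) ∈ {r : ℝ | ∃ x ∈ Ω, f x + φ (g x) = r} := ⟨x, hx, rfl⟩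
      have hb' := hb this
      rw [hg, hφ0] at hb'; linarith
  · intro x₀ hx₀ hg₀ hf₀
    have hz : φ (g x₀) = 0 := by rw [hg₀, hφ0]
    refine ⟨fun x hx => ?_, hz⟩
    rw [hz, hf₀]
    simpa using hlb x hx
end

section
/- Let Y₊ := {y ∈ ℓ² : yᵢ ≥ 0 for all i} be the positive cone of ℓ², Ω := {x ∈ ℓ² : ‖x‖ ≤ 1}, F(x) := {(xᵢ²)ᵢ} + Y₊, and G(x) := {(xᵢ³)ᵢ}. Then: (i) the only x ∈ Ω with G(x) = {0} is x = 0, and F(0) = Y₊, so 0 is a minimal solution of the constrained problem; (ii) for the process Δ(z) := {y ∈ ℓ² : yᵢ ≥ ‖z‖_{ℓ²} for all i}, the graph of Δ is a closed convex cone; (iii) for every x ∈ Ω, (F(x) + Δ(G(x))) ∩ (-Y₊) ⊂ {0}, so 0 remains a minimal point of the penalized problem; (iv) core(Gph(Δ)) = ∅. -/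
noncomputable section

abbrev l2 : Type := lp (fun _ : ℕ => ℝ) 2

/-- The positive cone of `ℓ²`. -/
def Ypos : Set l2 := {y : l2 | ∀ i : ℕ, 0 ≤ y i}

/-- `F(x) = {(xᵢ²)ᵢ} + Y₊`, described coordinatewise. -/
def Fmap (x : l2) : Set l2 :=
  {y : l2 | ∃ p : l2, p ∈ Ypos ∧ ∀ i : ℕ, y i = x i ^ 2 + p i}

/-- `G(x) = {(xᵢ³)ᵢ}`, described coordinatewise. -/
def Gmap (x : l2) : Set l2 := {z : l2 | ∀ i : ℕ, z i = x i ^ 3}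

/-- The multiplier process `Δ(z) = {y ∈ ℓ² : yᵢ ≥ ‖z‖ for all i}`. -/
def Dmap (z : l2) : Set l2 := {y : l2 | ∀ i : ℕ, ‖z‖ ≤ y i}

/-!
Coordinates of a vector of `ℓ²` tend to zero, so a vector all of whose coordinates are at least
`‖z‖` forces `‖z‖ ≤ 0`. Hence `Δ(z) = ∅` for `z ≠ 0` and `Gph Δ = {0} × Y₊`: a closed convex cone,
with empty core because moving in a direction `(v, 0)` with `v ≠ 0` leaves `{0} × ℓ²`.
Every other claim reduces to coordinatewise nonnegativity of `F(x)` and of `Δ(z)`.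
-/

open Filter Topology

theorem Memℓp.tendsto_norm_cofinite_zero {α : Type*} {E : α → Type*}
    [∀ i, NormedAddCommGroup (E i)] {p : ENNReal} {f : ∀ i, E i} (hf : Memℓp f p)
    (hp : 0 < p.toReal) : Tendsto (fun i => ‖f i‖) cofinite (𝓝 0) := by
  have := (hf.summable hp).tendsto_cofinite_zero.rpow_const (p := p.toReal⁻¹)
    (Or.inr (inv_nonneg.mpr hp.le))
  simpa [← Real.rpow_mul (norm_nonneg _), mul_inv_cancel₀ hp.ne',
    Real.zero_rpow (inv_ne_zero hp.ne')] using this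

theorem lp.le_zero_of_forall_le_apply {ι : Type*} [Infinite ι] {p : ENNReal}
    (hp : 0 < p.toReal) (f : lp (fun _ : ι => ℝ) p) {c : ℝ} (hc : ∀ i, c ≤ f i) : c ≤ 0 :=
  ge_of_tendsto
    (tendsto_zero_iff_norm_tendsto_zero.mpr ((lp.memℓp f).tendsto_norm_cofinite_zero hp))
    (Eventually.of_forall hc)

instance lp.instNontrivial {α : Type*} [Nonempty α] {E : α → Type*}
    [∀ i, NormedAddCommGroup (E i)] [∀ i, Nontrivial (E i)] {p : ENNReal} :
    Nontrivial (lp E p) := by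
  classical
  obtain ⟨i⟩ := ‹Nonempty α›
  obtain ⟨a, ha⟩ := exists_ne (0 : E i)
  exact ⟨⟨lp.single p i a, 0, fun h => ha (by simpa using congrArg (· i) h)⟩⟩

theorem algCore_singleton_prod_eq_empty {E F : Type*} [AddCommGroup E] [Module ℝ E]
    [Nontrivial E] [AddCommGroup F] [Module ℝ F] (a : E) (B : Set F) :
    algCore ({a} ×ˢ B) = ∅ := by
  refine Set.eq_empty_of_forall_notMem fun q ⟨_, hq⟩ => ?_
  obtain ⟨v, hv⟩ := exists_ne (0 : E)
  obtain ⟨δ, hδ, hδq⟩ := hq (v, 0)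
  have hq₁ : q.1 = a := by simpa using (hδq 0 le_rfl hδ.le).1
  have hδv : q.1 + δ • v = a := (hδq δ hδ.le le_rfl).1
  rw [hq₁, add_eq_left, smul_eq_zero] at hδv
  exact hδv.elim hδ.ne' hv

theorem smul_mem_Ypos {r : ℝ} (hr : 0 ≤ r) {y : l2} (hy : y ∈ Ypos) : r • y ∈ Ypos :=
  fun i => mul_nonneg hr (hy i)

theorem add_mem_Ypos {y y' : l2} (hy : y ∈ Ypos) (hy' : y' ∈ Ypos) : y + y' ∈ Ypos :=
  fun i => add_nonneg (hy i) (hy' i)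

theorem eq_zero_of_mem_Ypos_of_nonpos {y : l2} (hy : y ∈ Ypos) (hle : ∀ i, y i ≤ 0) : y = 0 :=
  lp.ext (funext fun i => (hle i).antisymm (hy i))

theorem isClosed_Ypos : IsClosed Ypos := by
  simp only [Ypos, Set.ofPred_forall]
  exact isClosed_iInter fun i => isClosed_le continuous_const (lp.evalCLM ℝ _ 2 i).continuous

theorem convex_Ypos : Convex ℝ Ypos :=
  fun _ hx _ hy _ _ ha hb _ => add_mem_Ypos (smul_mem_Ypos ha hx) (smul_mem_Ypos hb hy)

theorem Fmap_subset_Ypos (x : l2) : Fmap x ⊆ Ypos := by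
  rintro y ⟨p, hp, hy⟩ i
  rw [hy i]
  exact add_nonneg (sq_nonneg _) (hp i)

theorem Fmap_zero : Fmap 0 = Ypos :=
  (Fmap_subset_Ypos 0).antisymm fun y hy => ⟨y, hy, fun i => by simp⟩

theorem eq_zero_of_zero_mem_Gmap {x : l2} (hx : (0 : l2) ∈ Gmap x) : x = 0 :=
  lp.ext (funext fun i => pow_eq_zero_iff (n := 3) (by norm_num) |>.mp (hx i).symm)

theorem mem_Dmap_iff {z y : l2} : y ∈ Dmap z ↔ z = 0 ∧ y ∈ Ypos := by
  refine ⟨fun hy => ?_, fun ⟨hz, hy⟩ i => by simpa [hz] using hy i⟩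
  have hz : z = 0 := norm_le_zero_iff.mp (lp.le_zero_of_forall_le_apply (by norm_num) y hy)
  exact ⟨hz, fun i => by simpa [hz] using hy i⟩

theorem graph_Dmap_eq : {p : l2 × l2 | p.2 ∈ Dmap p.1} = {0} ×ˢ Ypos := by
  ext ⟨z, y⟩
  exact mem_Dmap_iff

/-- in `ℓ²` with the positive cone `Y₊`, `Ω` the closed unit ball,
`F(x) = {(xᵢ²)} + Y₊`, `G(x) = {(xᵢ³)}` and `Δ(z) = {y : yᵢ ≥ ‖z‖ ∀i}`:
(i) the only feasible `x ∈ Ω` with `0 ∈ G(x)` is `x = 0`, `F(0) = Y₊`, and `0` is a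
minimal point of the constrained problem;
(ii) `Gph(Δ)` is a closed convex cone;
(iii) for every `x ∈ Ω`, `(F(x) + Δ(G(x))) ∩ (-Y₊) ⊂ {0}`;
(iv) `core(Gph(Δ)) = ∅`. -/
theorem ell2_example :
    (∀ x ∈ Metric.closedBall (0 : l2) 1, (0 : l2) ∈ Gmap x → x = 0) ∧
    Fmap 0 = Ypos ∧
    ((0 : l2) ∈ Fmap 0 ∧ ∀ y ∈ Fmap 0, (∀ i : ℕ, y i ≤ 0) → y = 0) ∧
    (IsClosed {p : l2 × l2 | p.2 ∈ Dmap p.1} ∧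
      Convex ℝ {p : l2 × l2 | p.2 ∈ Dmap p.1} ∧
      ∀ r : ℝ, 0 ≤ r → ∀ p ∈ {p : l2 × l2 | p.2 ∈ Dmap p.1},
        r • p ∈ {p : l2 × l2 | p.2 ∈ Dmap p.1}) ∧
    (∀ x ∈ Metric.closedBall (0 : l2) 1, ∀ a ∈ Fmap x, ∀ z ∈ Gmap x, ∀ d ∈ Dmap z,
      (∀ i : ℕ, (a + d) i ≤ 0) → a + d = 0) ∧
    algCore {p : l2 × l2 | p.2 ∈ Dmap p.1} = ∅ := by
  rw [graph_Dmap_eq, Fmap_zero]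
  refine ⟨fun x _ => eq_zero_of_zero_mem_Gmap, rfl,
    ⟨fun i => le_rfl, fun y hy => eq_zero_of_mem_Ypos_of_nonpos hy⟩,
    ⟨isClosed_singleton.prod isClosed_Ypos, (convex_singleton 0).prod convex_Ypos,
      fun r hr p ⟨hp₁, hp₂⟩ => ⟨by simp [Set.mem_singleton_iff.mp hp₁], smul_mem_Ypos hr hp₂⟩⟩,
    fun x _ a ha z _ d hd => eq_zero_of_mem_Ypos_of_nonpos
      (add_mem_Ypos (Fmap_subset_Ypos x ha) (mem_Dmap_iff.mp hd).2),
    algCore_singleton_prod_eq_empty 0 Ypos⟩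
end
end
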